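/- Let $n \geq 2$ and let $U$ be the group of unipotent upper triangular $n\times n$ complex matrices, acting by simultaneous conjugation on pairs $(A_1, A_2)$ of upper triangular matrices. Then the polynomial $f(A_1,A_2) = (a_{11}-a_{22})b_{12} - (b_{11}-b_{22})a_{12}$ (where $A_1 = (a_{ij})$, $A_2 = (b_{ij})$) is a $U$-invariant that is not a polynomial in the diagonal coordinates; hence the invariant ring $\mathbb{C}[\mathfrak{b}^{\oplus 2}]^U$ strictly contains $\mathbb{C}[\mathfrak{t}^{\oplus 2}]$. -/
import Mathlib


open Matrix

lemma sum_one_aux {n : ℕ} (a : Fin n) (g : Fin n → ℂ)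
    (hg : ∀ k, k ≠ a → g k = 0) : ∑ k, g k = g a :=
  Finset.sum_eq_single a (fun k _ hk => hg k hk) (by simp)

lemma sum_two_aux {n : ℕ} (a b : Fin n) (hab : a ≠ b) (g : Fin n → ℂ)
    (hg : ∀ k, k ≠ a → k ≠ b → g k = 0) : ∑ k, g k = g a + g b := by
  rw [← Finset.sum_subset (Finset.subset_univ ({a, b} : Finset (Fin n)))]
  · rw [Finset.sum_pair hab]
  · intro x _ hx
    simp only [Finset.mem_insert, Finset.mem_singleton, not_or] at hx
    exact hg x hx.1 hx.2

lemma conj_aux {n : ℕ} (i0 i1 : Fin n) (h0 : i0.val = 0) (h1 : i1.val = 1)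
    (u A v : Matrix (Fin n) (Fin n) ℂ)
    (hu : ∀ i j, j < i → u i j = 0) (hud : ∀ i, u i i = 1)
    (hA : ∀ i j, j < i → A i j = 0)
    (hv0 : ∀ k, v k i0 = if k = i0 then 1 else 0)
    (hv1 : ∀ k, v k i1 = (if k = i1 then (1:ℂ) else 0) - (if k = i0 then u i0 i1 else 0)) :
    (u * A * v) i0 i0 = A i0 i0 ∧ (u * A * v) i1 i1 = A i1 i1 ∧
    (u * A * v) i0 i1 = A i0 i1 + u i0 i1 * (A i1 i1 - A i0 i0) := by
  have hne : i0 ≠ i1 := by intro h; rw [h] at h0; omega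
  have h01 : i0 < i1 := by simp only [Fin.lt_def, h0, h1]; omega
  have hlt0 : ∀ k : Fin n, k ≠ i0 → i0 < k := by
    intro k hk
    simp only [Fin.lt_def, h0]
    rcases Nat.eq_zero_or_pos k.val with h | h
    · exact absurd (Fin.ext (by omega)) hk
    · omega
  have hlt1 : ∀ k : Fin n, k ≠ i0 → k ≠ i1 → i1 < k := by
    intro k hk0 hk1
    simp only [Fin.lt_def, h1]
    have : k.val ≠ 0 := fun h => hk0 (Fin.ext (by omega))
    have : k.val ≠ 1 := fun h => hk1 (Fin.ext (by omega))
    omega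
  -- entries of M = u * A
  have hM00 : (u * A) i0 i0 = A i0 i0 := by
    rw [Matrix.mul_apply, sum_one_aux i0 _ (fun k hk => by
      rw [hA k i0 (hlt0 k hk), mul_zero]), hud, one_mul]
  have hM10 : (u * A) i1 i0 = 0 := by
    rw [Matrix.mul_apply, sum_one_aux i0 _ (fun k hk => by
      rw [hA k i0 (hlt0 k hk), mul_zero]), hu i1 i0 h01, zero_mul]
  have hM11 : (u * A) i1 i1 = A i1 i1 := by
    rw [Matrix.mul_apply, sum_two_aux i0 i1 hne _ (fun k hk0 hk1 => by
      rw [hA k i1 (hlt1 k hk0 hk1), mul_zero]), hu i1 i0 h01, hud, zero_mul, one_mul,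
      zero_add]
  have hM01 : (u * A) i0 i1 = A i0 i1 + u i0 i1 * A i1 i1 := by
    rw [Matrix.mul_apply, sum_two_aux i0 i1 hne _ (fun k hk0 hk1 => by
      rw [hA k i1 (hlt1 k hk0 hk1), mul_zero]), hud, one_mul]
  -- entries of M * v
  refine ⟨?_, ?_, ?_⟩
  · rw [Matrix.mul_apply, sum_one_aux i0 _ (fun k hk => by
      rw [hv0 k, if_neg hk, mul_zero]), hv0, if_pos rfl, mul_one, hM00]
  · rw [Matrix.mul_apply, sum_two_aux i0 i1 hne _ (fun k hk0 hk1 => by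
      rw [hv1 k, if_neg hk1, if_neg hk0, sub_zero, mul_zero]),
      hv1 i0, hv1 i1, if_neg hne, if_pos rfl, if_pos rfl, if_neg (Ne.symm hne),
      hM10, hM11]
    ring
  · rw [Matrix.mul_apply, sum_two_aux i0 i1 hne _ (fun k hk0 hk1 => by
      rw [hv1 k, if_neg hk1, if_neg hk0, sub_zero, mul_zero]),
      hv1 i0, hv1 i1, if_neg hne, if_pos rfl, if_pos rfl, if_neg (Ne.symm hne),
      hM00, hM01]
    ring

theorem stmt15 {n : ℕ} (hn : 2 ≤ n) :
    let i0 : Fin n := ⟨0, by omega⟩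
    let i1 : Fin n := ⟨1, by omega⟩
    let f : Matrix (Fin n) (Fin n) ℂ → Matrix (Fin n) (Fin n) ℂ → ℂ := fun A B =>
      (A i0 i0 - A i1 i1) * B i0 i1 - (B i0 i0 - B i1 i1) * A i0 i1
    (∀ u A₁ A₂ : Matrix (Fin n) (Fin n) ℂ,
      (∀ i j : Fin n, j < i → u i j = 0) → (∀ i : Fin n, u i i = 1) →
      (∀ i j : Fin n, j < i → A₁ i j = 0) →
      (∀ i j : Fin n, j < i → A₂ i j = 0) →
      f (u * A₁ * u⁻¹) (u * A₂ * u⁻¹) = f A₁ A₂) ∧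
    ¬ ∃ h : MvPolynomial (Fin 2 × Fin n) ℂ,
        ∀ A₁ A₂ : Matrix (Fin n) (Fin n) ℂ,
          (∀ i j : Fin n, j < i → A₁ i j = 0) →
          (∀ i j : Fin n, j < i → A₂ i j = 0) →
          f A₁ A₂ = MvPolynomial.eval
            (fun q : Fin 2 × Fin n => ![A₁, A₂] q.1 q.2 q.2) h := by
  intro i0 i1 f
  have h0 : i0.val = 0 := rfl
  have h1 : i1.val = 1 := rfl
  have hne : i0 ≠ i1 := by intro h; rw [h] at h0; rw [h1] at h0; omega
  have h01 : i0 < i1 := by simp only [Fin.lt_def, h0, h1]; omega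
  constructor
  · intro u A₁ A₂ hu hud hA₁ hA₂
    -- u is invertible with det 1
    have hdet : u.det = 1 := by
      rw [Matrix.det_of_upperTriangular (fun i j h => hu i j h)]
      simp [hud]
    have hunit : IsUnit u.det := by rw [hdet]; exact isUnit_one
    have hvu : u⁻¹ * u = 1 := nonsing_inv_mul u hunit
    -- column formulas for u⁻¹
    have hvcol : ∀ (j : Fin n) (w : Fin n → ℂ),
        (u.mulVec w = fun i => if i = j then 1 else 0) → ∀ i, u⁻¹ i j = w i := by
      intro j w hw i
      have h2 : u⁻¹.mulVec (u.mulVec w) = w := by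
        rw [Matrix.mulVec_mulVec, hvu, Matrix.one_mulVec]
      rw [hw] at h2
      have h3 := congrFun h2 i
      simpa [Matrix.mulVec, dotProduct, mul_ite] using h3
    have hv0 : ∀ k, u⁻¹ k i0 = if k = i0 then 1 else 0 := by
      apply hvcol
      funext i
      simp only [Matrix.mulVec, dotProduct, mul_ite, mul_one, mul_zero,
        Finset.sum_ite_eq', Finset.mem_univ, if_true]
      by_cases hi : i = i0
      · rw [hi, hud, if_pos rfl]
      · rw [hu i i0 (by
          simp only [Fin.lt_def, h0]
          have : i.val ≠ 0 := fun h => hi (Fin.ext (by omega))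
          omega), if_neg hi]
    have hv1 : ∀ k, u⁻¹ k i1 =
        (if k = i1 then (1:ℂ) else 0) - (if k = i0 then u i0 i1 else 0) := by
      apply hvcol
      funext i
      simp only [Matrix.mulVec, dotProduct, mul_sub, mul_ite, mul_one, mul_zero,
        Finset.sum_sub_distrib, Finset.sum_ite_eq', Finset.mem_univ, if_true]
      by_cases hi1 : i = i1
      · rw [hi1, hud, hu i1 i0 h01, if_pos rfl, zero_mul, sub_zero]
      · by_cases hi0 : i = i0
        · rw [hi0, hud, if_neg hne, one_mul, sub_self]
        · rw [hu i i1 (by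
            simp only [Fin.lt_def, h1]
            have : i.val ≠ 0 := fun h => hi0 (Fin.ext (by omega))
            have : i.val ≠ 1 := fun h => hi1 (Fin.ext (by omega))
            omega), hu i i0 (by
            simp only [Fin.lt_def, h0]
            have : i.val ≠ 0 := fun h => hi0 (Fin.ext (by omega))
            omega), if_neg hi1, zero_mul, sub_zero]
    obtain ⟨hc100, hc111, hc101⟩ := conj_aux i0 i1 h0 h1 u A₁ u⁻¹ hu hud hA₁ hv0 hv1
    obtain ⟨hc200, hc211, hc201⟩ := conj_aux i0 i1 h0 h1 u A₂ u⁻¹ hu hud hA₂ hv0 hv1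
    show ((u * A₁ * u⁻¹) i0 i0 - (u * A₁ * u⁻¹) i1 i1) * (u * A₂ * u⁻¹) i0 i1 -
        ((u * A₂ * u⁻¹) i0 i0 - (u * A₂ * u⁻¹) i1 i1) * (u * A₁ * u⁻¹) i0 i1 = _
    rw [hc100, hc111, hc101, hc200, hc211, hc201]
    ring
  · rintro ⟨h, hh⟩
    -- counterexample: A₁ = E_{01}, A₂ = E_{00}, versus A₁' = 0, A₂
    set E01 : Matrix (Fin n) (Fin n) ℂ := fun i j => if i = i0 ∧ j = i1 then 1 else 0 with hE01
    set E00 : Matrix (Fin n) (Fin n) ℂ := fun i j => if i = i0 ∧ j = i0 then 1 else 0 with hE00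
    have ht1 : ∀ i j : Fin n, j < i → E01 i j = 0 := by
      intro i j hij
      rw [hE01]
      simp only
      rw [if_neg]
      rintro ⟨rfl, rfl⟩
      exact absurd hij (not_lt_of_gt h01)
    have ht2 : ∀ i j : Fin n, j < i → E00 i j = 0 := by
      intro i j hij
      rw [hE00]
      simp only
      rw [if_neg]
      rintro ⟨rfl, rfl⟩
      exact lt_irrefl _ hij
    have ht0 : ∀ i j : Fin n, j < i → (0 : Matrix (Fin n) (Fin n) ℂ) i j = 0 :=
      fun _ _ _ => rfl
    have he1 := hh E01 E00 ht1 ht2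
    have he2 := hh 0 E00 ht0 ht2
    -- the evaluation points agree since diagonals agree
    have heq : (fun q : Fin 2 × Fin n => ![E01, E00] q.1 q.2 q.2) =
        (fun q : Fin 2 × Fin n => ![(0 : Matrix (Fin n) (Fin n) ℂ), E00] q.1 q.2 q.2) := by
      funext q
      obtain ⟨a, k⟩ := q
      fin_cases a
      · show E01 k k = (0 : Matrix (Fin n) (Fin n) ℂ) k k
        rw [hE01]
        simp only [Matrix.zero_apply]
        rw [if_neg]
        exact fun h' => hne (h'.1.symm.trans h'.2)
      · rfl
    rw [heq] at he1
    rw [← he2] at he1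
    -- compute both sides of he1
    have hv1 : f E01 E00 = -1 := by
      show (E01 i0 i0 - E01 i1 i1) * E00 i0 i1 - (E00 i0 i0 - E00 i1 i1) * E01 i0 i1 = -1
      rw [hE01, hE00]
      simp [hne, Ne.symm hne]
    have hv2 : f 0 E00 = 0 := by
      show ((0:Matrix (Fin n) (Fin n) ℂ) i0 i0 - (0:Matrix (Fin n) (Fin n) ℂ) i1 i1) * E00 i0 i1
        - (E00 i0 i0 - E00 i1 i1) * (0:Matrix (Fin n) (Fin n) ℂ) i0 i1 = 0
      simp
    rw [hv1, hv2] at he1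
    exact absurd he1 (by norm_num)
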